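/- Let p be a polynomial with real coefficients of degree 6, with coefficients c_i, such that c_0 > 0, p is palindromic (c_i = c_{6-i} for all 0 ≤ i ≤ 6), and the coefficients of p alternate in sign ((-1)^i · c_i ≥ 0 for every i ≥ 0). If at least two of the complex roots of p, counted with multiplicity, lie on the unit circle, then every complex root z of p satisfies Re z > -1. -/

import Mathlib

/-!
Suppose `z` is a root with `Re z ≤ -1`. Alternating signs make `p` positive on `(-∞, 0]`, so
`z` is not real; `p` is real and palindromic, so it also vanishes at `z̄`, `z⁻¹` and `z̄⁻¹`.
These four points are distinct and off the unit circle, so together with the two roots on the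
circle they are all six roots. Their real parts then sum to less than `-2 + 2 = 0`, while by
Vieta the sum of the roots is `-c₅ / c₆ ≥ 0`.
-/

open Polynomial ComplexConjugate

theorem Multiset.eq_add_filter_of_nodup {α : Type*} {q : α → Prop} [DecidablePred q]
    {s m : Multiset α} (hm : m.Nodup) (hms : ∀ x ∈ m, x ∈ s ∧ ¬q x)
    (hcard : Multiset.card s ≤ Multiset.card m + Multiset.card (s.filter q)) :
    s = m + s.filter q := by
  have hle : m ≤ s.filter (¬q ·) :=
    (Multiset.le_iff_subset hm).mpr fun x hx => Multiset.mem_filter.mpr (hms x hx)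
  have hsplit := Multiset.filter_add_not q s
  have heq : m = s.filter (¬q ·) := by
    refine Multiset.eq_of_le_of_card_le hle ?_
    have := congrArg Multiset.card hsplit
    rw [card_add] at this
    omega
  rw [heq, add_comm, hsplit]

namespace Complex

noncomputable def conjInvOrbit (z : ℂ) : Multiset ℂ := {z, conj z, z⁻¹, (conj z)⁻¹}

theorem card_conjInvOrbit (z : ℂ) : Multiset.card (conjInvOrbit z) = 4 := rfl

theorem norm_ne_one_of_mem_conjInvOrbit {z w : ℂ} (hz : ‖z‖ ≠ 1) (hw : w ∈ conjInvOrbit z) :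
    ‖w‖ ≠ 1 := by
  simp only [conjInvOrbit, Multiset.insert_eq_cons, Multiset.mem_cons,
    Multiset.mem_singleton] at hw
  rcases hw with rfl | rfl | rfl | rfl <;> simpa using hz

theorem conjInvOrbit_nodup {z : ℂ} (him : z.im ≠ 0) (hz : ‖z‖ ≠ 1) :
    (conjInvOrbit z).Nodup := by
  have hz0 : 0 < ‖z‖ := norm_pos_iff.mpr fun h => him (by simp [h])
  have hr : ‖z‖ ≠ ‖z‖⁻¹ := fun h => hz <| by
    have := mul_inv_cancel₀ hz0.ne'
    rw [← h] at this
    nlinarith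
  have hconj : z ≠ conj z := fun h => him (conj_eq_iff_im.mp h.symm)
  simp only [conjInvOrbit, Multiset.insert_eq_cons, Multiset.nodup_cons, Multiset.mem_cons,
    Multiset.mem_singleton, Multiset.nodup_singleton, and_true, not_or]
  refine ⟨⟨hconj, ?_, ?_⟩, ⟨?_, ?_⟩, fun h => hconj (inv_injective h)⟩ <;>
    exact fun h => hr (by simpa using congrArg norm h)

theorem norm_ne_one_of_re_le_neg_one {z : ℂ} (hre : z.re ≤ -1) (him : z.im ≠ 0) : ‖z‖ ≠ 1 :=
  fun h => by
    have := Complex.sq_norm z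
    rw [h, normSq_apply] at this
    nlinarith [mul_self_pos.mpr him]

theorem re_sum_conjInvOrbit (z : ℂ) :
    (conjInvOrbit z).sum.re = 2 * z.re * (1 + (normSq z)⁻¹) := by
  simp only [conjInvOrbit, Multiset.insert_eq_cons, Multiset.sum_cons, Multiset.sum_singleton,
    add_re, conj_re, inv_re, normSq_conj]
  ring

theorem re_sum_conjInvOrbit_lt_neg_two {z : ℂ} (hre : z.re ≤ -1) :
    (conjInvOrbit z).sum.re < -2 := by
  have hpos : 0 < (normSq z)⁻¹ :=
    inv_pos.mpr (normSq_pos.mpr fun h => by simp [h] at hre; linarith)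
  rw [re_sum_conjInvOrbit]
  nlinarith

theorem re_multiset_sum_le_card {s : Multiset ℂ} (hs : ∀ x ∈ s, ‖x‖ ≤ 1) :
    s.sum.re ≤ Multiset.card s := by
  calc s.sum.re ≤ ‖s.sum‖ := re_le_norm _
    _ ≤ (s.map (‖·‖)).sum := norm_multiset_sum_le s
    _ ≤ Multiset.card s := by
      simpa using Multiset.sum_le_card_nsmul (s.map (‖·‖)) 1 (by simpa using hs)

end Complex

namespace Polynomial

theorem eval_pos_of_alternating {p : ℝ[X]} (h0 : 0 < p.coeff 0)
    (halt : ∀ i, 0 ≤ (-1 : ℝ) ^ i * p.coeff i) {x : ℝ} (hx : x ≤ 0) : 0 < p.eval x := by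
  rw [eval_eq_sum_range]
  refine Finset.sum_pos' (fun i _ => ?_) ⟨0, by simp, by simpa using h0⟩
  have hsq : ((-1 : ℝ) ^ i) ^ 2 = 1 := by rw [← pow_mul, mul_comm, pow_mul]; simp
  have : p.coeff i * x ^ i = (-1) ^ i * p.coeff i * (-x) ^ i := by
    rw [neg_pow]; linear_combination (-p.coeff i * x ^ i) * hsq
  rw [this]
  exact mul_nonneg (halt i) (pow_nonneg (neg_nonneg.mpr hx) i)

theorem im_ne_zero_of_aeval_eq_zero {p : ℝ[X]} (hpos : ∀ x : ℝ, x ≤ 0 → 0 < p.eval x) {z : ℂ}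
    (hz : aeval z p = 0) (hre : z.re ≤ 0) : z.im ≠ 0 := by
  intro him
  have hz_real : z = algebraMap ℝ ℂ z.re := Complex.ext rfl (by simp [him])
  rw [hz_real, aeval_algebraMap_apply_eq_algebraMap_eval, map_eq_zero] at hz
  exact (hpos z.re hre).ne' hz

theorem reverse_eq_self_of_coeff_eq {R : Type*} [Semiring R] {p : R[X]}
    (hpal : ∀ i ≤ p.natDegree, p.coeff i = p.coeff (p.natDegree - i)) : p.reverse = p := by
  ext i
  rw [coeff_reverse]
  by_cases hi : i ≤ p.natDegree
  · rw [revAt_le hi, hpal i hi]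
  · rw [revAt_eq_self_of_lt (not_le.mp hi)]

theorem aeval_inv_eq_zero_of_reverse_eq_self {R K : Type*} [CommSemiring R] [Field K]
    [Algebra R K] {p : R[X]} (hp : p.reverse = p) {w : K} (hw : aeval w p = 0) :
    aeval w⁻¹ p = 0 := by
  rcases eq_or_ne w 0 with rfl | hw0
  · simpa using hw
  let _ : Invertible w⁻¹ := invertibleOfNonzero (inv_ne_zero hw0)
  rw [aeval_def, ← eval₂_reverse_eq_zero_iff, invOf_eq_inv, inv_inv, hp, ← aeval_def, hw]

theorem leadingCoeff_mul_re_sum_roots_map_complex (p : ℝ[X]) :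
    p.leadingCoeff * ((p.map (algebraMap ℝ ℂ)).roots.sum).re = -p.nextCoeff := by
  have h :=
    (IsAlgClosed.splits (p.map (algebraMap ℝ ℂ))).nextCoeff_eq_neg_sum_roots_mul_leadingCoeff
  rw [nextCoeff_map (algebraMap ℝ ℂ).injective, leadingCoeff_map] at h
  have := congrArg Complex.re h
  simp only [Complex.coe_algebraMap, Complex.ofReal_re, neg_mul, Complex.neg_re,
    Complex.re_ofReal_mul] at this
  linarith

theorem re_sum_roots_map_complex_nonneg {p : ℝ[X]} (hlead : 0 < p.leadingCoeff)
    (hnext : p.nextCoeff ≤ 0) : 0 ≤ ((p.map (algebraMap ℝ ℂ)).roots.sum).re := by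
  refine (mul_nonneg_iff_of_pos_left hlead).mp ?_
  rw [leadingCoeff_mul_re_sum_roots_map_complex]
  exact neg_nonneg.mpr hnext

theorem aeval_eq_zero_of_mem_conjInvOrbit {p : ℝ[X]} (hp : p.reverse = p) {z w : ℂ}
    (hz : aeval z p = 0) (hw : w ∈ Complex.conjInvOrbit z) : aeval w p = 0 := by
  have hconj : aeval (conj z) p = 0 := by rw [aeval_conj, hz, map_zero]
  simp only [Complex.conjInvOrbit, Multiset.insert_eq_cons, Multiset.mem_cons,
    Multiset.mem_singleton] at hw
  rcases hw with rfl | rfl | rfl | rfl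
  exacts [hz, hconj, aeval_inv_eq_zero_of_reverse_eq_self hp hz,
    aeval_inv_eq_zero_of_reverse_eq_self hp hconj]

theorem roots_map_eq_conjInvOrbit_add_filter {p : ℝ[X]} (hdeg : p.natDegree = 6)
    (hp : p.reverse = p) {z : ℂ} (hz : aeval z p = 0) (him : z.im ≠ 0) (hnorm : ‖z‖ ≠ 1)
    (hcirc : 2 ≤ ((p.map (algebraMap ℝ ℂ)).roots.filter fun w => ‖w‖ = 1).card) :
    (p.map (algebraMap ℝ ℂ)).roots =
      Complex.conjInvOrbit z + (p.map (algebraMap ℝ ℂ)).roots.filter fun w => ‖w‖ = 1 := by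
  have hp0 : p ≠ 0 := fun h => by simp [h] at hdeg
  refine Multiset.eq_add_filter_of_nodup (Complex.conjInvOrbit_nodup him hnorm)
    (fun w hw => ⟨?_, Complex.norm_ne_one_of_mem_conjInvOrbit hnorm hw⟩) ?_
  · rw [mem_roots_map_of_injective (algebraMap ℝ ℂ).injective hp0, ← aeval_def]
    exact aeval_eq_zero_of_mem_conjInvOrbit hp hz hw
  · rw [IsAlgClosed.card_roots_map_eq_natDegree_of_injective p (algebraMap ℝ ℂ).injective, hdeg,
      Complex.card_conjInvOrbit]
    omega

end Polynomial

/-- A real polynomial of degree `6` with positive constant term, palindromic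
coefficients (`cᵢ = c_{6-i}`) and coefficients alternating in sign, having at
least two complex roots (counted with multiplicity) on the unit circle, has all
its complex roots with real part `> -1`. -/
theorem stmt_3 (p : Polynomial ℝ)
    (hdeg : p.natDegree = 6)
    (h0 : 0 < p.coeff 0)
    (hpal : ∀ i ≤ 6, p.coeff i = p.coeff (6 - i))
    (halt : ∀ i : ℕ, 0 ≤ (-1 : ℝ) ^ i * p.coeff i)
    (hcirc : 2 ≤
      ((p.map (algebraMap ℝ ℂ)).roots.filter fun z => ‖z‖ = 1).card) :
    ∀ z : ℂ, Polynomial.aeval z p = 0 → -1 < z.re := by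
  intro z hz
  by_contra! hre
  have him := im_ne_zero_of_aeval_eq_zero (fun x => eval_pos_of_alternating h0 halt) hz
    (by linarith)
  have hnorm := Complex.norm_ne_one_of_re_le_neg_one hre him
  have hroots := roots_map_eq_conjInvOrbit_add_filter hdeg
    (reverse_eq_self_of_coeff_eq (hdeg ▸ hpal)) hz him hnorm hcirc
  set F := (p.map (algebraMap ℝ ℂ)).roots.filter fun w => ‖w‖ = 1
  have hcard : F.card = 2 := by
    have := congrArg Multiset.card hroots
    rw [IsAlgClosed.card_roots_map_eq_natDegree_of_injective p (algebraMap ℝ ℂ).injective, hdeg,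
      Multiset.card_add, Complex.card_conjInvOrbit] at this
    omega
  have hcircle : F.sum.re ≤ 2 := by
    simpa [hcard] using
      Complex.re_multiset_sum_le_card (s := F) fun w hw => (Multiset.mem_filter.mp hw).2.le
  have horbit := Complex.re_sum_conjInvOrbit_lt_neg_two hre
  have hsum := re_sum_roots_map_complex_nonneg
    (by rw [leadingCoeff, hdeg, hpal 6 le_rfl]; exact h0)
    (by simpa [nextCoeff, hdeg, Odd.neg_one_pow (by decide : Odd 5)] using halt 5)
  rw [hroots, Multiset.sum_add, Complex.add_re] at hsum
  linarith
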